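/- arXiv:2007.05614 — 2 statements merged into one kernel-verified Lean document; each statement's English description precedes it below -/
import Mathlib

section
/- Let S be a finite type, P : S → S → ℝ a row-stochastic matrix, D : S → S → ℝ with 0 ≤ D i j ≤ Dmax for a real Dmax ≥ 1, and H > 1 a real number. Define D̂ i = Σ_j D i j · P i j and D̂'_H i = Σ_j D i j · (1 − 1/H)^(D i j) · P i j. Then for every i ∈ S: |D̂ i − D̂'_H i| ≤ Dmax² / H. -/
/-!
Each transition `i → j` loses the fraction `1 - (1 - 1/H) ^ D i j` of its weight, and by
Bernoulli's inequality this is at most `D i j / H ≤ Dmax / H`. Hence the difficulty lost on that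
transition is at most `Dmax ^ 2 / H` times `P i j`, and averaging over the row of `P` gives the
bound.
-/

open Finset Filter MeasureTheory ProbabilityTheory

/-- A matrix is row-stochastic if all entries are nonnegative and every row sums to 1. -/
def RowStochastic {S : Type*} [Fintype S] (P : S → S → ℝ) : Prop :=
  (∀ i j, 0 ≤ P i j) ∧ ∀ i, ∑ j, P i j = 1

/-- A matrix is irreducible if for all `i, j` there exists `n ≥ 1` with `(P ^ n) i j > 0`. -/
def MatIrreducible {S : Type*} [Fintype S] [DecidableEq S] (P : S → S → ℝ) : Prop :=
  ∀ i j, ∃ n, 1 ≤ n ∧ 0 < ((Matrix.of P) ^ n) i j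

/-- A stationary distribution of a matrix `Q`. -/
def MatIsStationary {T : Type*} [Fintype T] (Q : T → T → ℝ) (ν : T → ℝ) : Prop :=
  (∀ i, 0 ≤ ν i) ∧ (∑ i, ν i = 1) ∧ ∀ j, ∑ i, ν i * Q i j = ν j

/-- The probabilistic-termination matrix `P'_H` on `Option S`, with terminal state `none`
and restart state `s₀`. -/
noncomputable def PTMatrix {S : Type*} [Fintype S] [DecidableEq S]
    (P D : S → S → ℝ) (H : ℝ) (s₀ : S) : Option S → Option S → ℝ
  | some i, some j => (1 - 1 / H) ^ (D i j) * P i j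
  | some i, none => ∑ j, (1 - (1 - 1 / H) ^ (D i j)) * P i j
  | none, some j => if j = s₀ then 1 else 0
  | none, none => 0

/-- Expected one-step reward `R̂ i = ∑ j, R i j * P i j`. -/
noncomputable def Rhat {S : Type*} [Fintype S] (P R : S → S → ℝ) (i : S) : ℝ :=
  ∑ j, R i j * P i j

/-- Expected one-step difficulty contribution `D̂ i = ∑ j, D i j * P i j`. -/
noncomputable def Dhat {S : Type*} [Fintype S] (P D : S → S → ℝ) (i : S) : ℝ :=
  ∑ j, D i j * P i j

/-- Expected one-step reward in the probabilistically terminating chain. -/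
noncomputable def RhatPT {S : Type*} [Fintype S] (P R D : S → S → ℝ) (H : ℝ) (i : S) : ℝ :=
  ∑ j, R i j * ((1 - 1 / H) ^ (D i j) * P i j)

/-- Expected one-step difficulty contribution in the probabilistically terminating chain. -/
noncomputable def DhatPT {S : Type*} [Fintype S] (P D : S → S → ℝ) (H : ℝ) (i : S) : ℝ :=
  ∑ j, D i j * ((1 - 1 / H) ^ (D i j) * P i j)

theorem abs_sum_mul_le_of_abs_le {ι : Type*} [Fintype ι] {f p : ι → ℝ} {c : ℝ}
    (hp0 : ∀ j, 0 ≤ p j) (hp1 : ∑ j, p j = 1) (hf : ∀ j, |f j| ≤ c) :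
    |∑ j, f j * p j| ≤ c :=
  calc |∑ j, f j * p j| ≤ ∑ j, |f j| * p j := by
        simpa only [abs_mul, abs_of_nonneg (hp0 _)] using
          abs_sum_le_sum_abs (fun j => f j * p j) univ
    _ ≤ ∑ j, c * p j := sum_le_sum fun j _ => mul_le_mul_of_nonneg_right (hf j) (hp0 j)
    _ = c := by rw [← mul_sum, hp1, mul_one]

section OneSubRpow

variable {x d M : ℝ}

theorem one_sub_rpow_one_sub_nonneg (hx0 : 0 ≤ x) (hx1 : x ≤ 1) (hd : 0 ≤ d) :
    0 ≤ 1 - (1 - x) ^ d :=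
  sub_nonneg.2 (Real.rpow_le_one (by linarith) (by linarith) hd)

theorem one_sub_rpow_one_sub_le_mul (hx0 : 0 ≤ x) (hx1 : x ≤ 1) (hd : 0 ≤ d) (hdM : d ≤ M)
    (hM : 1 ≤ M) : 1 - (1 - x) ^ d ≤ M * x := by
  have hbernoulli : 1 - M * x ≤ (1 - x) ^ M := by
    simpa [← sub_eq_add_neg] using one_add_mul_self_le_rpow_one_add (s := -x) (by linarith) hM
  have hmono : (1 - x) ^ M ≤ (1 - x) ^ d :=
    Real.rpow_le_rpow_of_exponent_ge' (by linarith) (by linarith) hd hdM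
  linarith

theorem abs_mul_one_sub_rpow_one_sub_le (hx0 : 0 ≤ x) (hx1 : x ≤ 1) (hd : 0 ≤ d)
    (hdM : d ≤ M) (hM : 1 ≤ M) : |d * (1 - (1 - x) ^ d)| ≤ M ^ 2 * x := by
  rw [abs_of_nonneg (mul_nonneg hd (one_sub_rpow_one_sub_nonneg hx0 hx1 hd)), sq, mul_assoc]
  exact mul_le_mul hdM (one_sub_rpow_one_sub_le_mul hx0 hx1 hd hdM hM)
    (one_sub_rpow_one_sub_nonneg hx0 hx1 hd) (by linarith)

end OneSubRpow

theorem Dhat_sub_DhatPT {S : Type*} [Fintype S] (P D : S → S → ℝ) (H : ℝ) (i : S) :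
    Dhat P D i - DhatPT P D H i = ∑ j, D i j * (1 - (1 - 1 / H) ^ D i j) * P i j := by
  rw [Dhat, DhatPT, ← sum_sub_distrib]
  exact sum_congr rfl fun j _ => by ring

/-- Lemma 14 (explicit constants): the expected one-step difficulty contributions of the
original and PT chains agree up to `Dmax ^ 2 / H` in each state. -/
theorem expected_one_step_difficulty_perturbation {S : Type*} [Fintype S]
    (P D : S → S → ℝ) (Dmax H : ℝ)
    (hP : RowStochastic P)
    (hD0 : ∀ i j, 0 ≤ D i j) (hD1 : ∀ i j, D i j ≤ Dmax)
    (hDmax : 1 ≤ Dmax) (hH : 1 < H) :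
    ∀ i, |Dhat P D i - DhatPT P D H i| ≤ Dmax ^ 2 / H := by
  intro i
  have hx0 : 0 ≤ 1 / H := by positivity
  have hx1 : 1 / H ≤ 1 := (div_le_one (by linarith)).2 hH.le
  rw [Dhat_sub_DhatPT, div_eq_mul_one_div (Dmax ^ 2)]
  exact abs_sum_mul_le_of_abs_le (hP.1 i) (hP.2 i) fun j =>
    abs_mul_one_sub_rpow_one_sub_le hx0 hx1 (hD0 i j) (hD1 i j) hDmax
end

section
/- Let S be a finite nonempty type, P : S → S → ℝ a row-stochastic irreducible matrix with stationary distribution μ, R : S → S → ℝ with |R i j| ≤ Rmax, D : S → S → ℝ with 0 ≤ D i j ≤ Dmax (Dmax ≥ 1), and assume there exist i₀, j₀ with P i₀ j₀ > 0 and D i₀ j₀ > 0. Then there exist constants C > 0 and H₀ > 1 such that for every real H ≥ H₀ and every stationary distribution μ'_H of the probabilistic-termination matrix P'_H on Option S: |Σ_i R̂ i · μ i − Σ_i R̂'_H i · μ'_H (some i)| ≤ C / H and |Σ_i D̂ i · μ i − Σ_i D̂'_H i · μ'_H (some i)| ≤ C / H. -/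
/-!
Write `ν` for the restriction of `μ'` to `S`. A transition `i → j` survives with probability
`(1 - 1/H) ^ D i j ≥ 1 - Dmax/H` (Bernoulli), so stationarity of `P'_H` says that `ν` is
`P`-invariant up to a defect, the restart inflow into `s₀` minus the killed mass, of size at most
`Dmax/H`, and that `ν` has mass `1 - μ' none ≥ 1 - Dmax/H`. By irreducibility the linear map
`x ↦ (x - xP, ∑ x)` is injective on `ℝ^S`, hence bounded below, so `ν - μ = O(1/H)`. The two
averages differ by this change of stationary vector and by the `O(1/H)` change of the weights.
-/

open Finset Filter MeasureTheory ProbabilityTheory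

open Matrix

section WeightedSums

variable {ι : Type*} [Fintype ι] {ν a : ι → ℝ} {M : ℝ}

lemma sum_mul_le_of_sum_le_one (hν0 : ∀ i, 0 ≤ ν i) (hν1 : ∑ i, ν i ≤ 1) (hM : 0 ≤ M)
    (ha : ∀ i, a i ≤ M) : ∑ i, a i * ν i ≤ M :=
  calc ∑ i, a i * ν i ≤ ∑ i, M * ν i :=
        sum_le_sum fun i _ => mul_le_mul_of_nonneg_right (ha i) (hν0 i)
    _ = M * ∑ i, ν i := (mul_sum _ _ _).symm
    _ ≤ M := mul_le_of_le_one_right hM hν1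

lemma abs_sum_mul_le_of_sum_le_one (hν0 : ∀ i, 0 ≤ ν i) (hν1 : ∑ i, ν i ≤ 1) (hM : 0 ≤ M)
    (ha : ∀ i, |a i| ≤ M) : |∑ i, a i * ν i| ≤ M :=
  calc |∑ i, a i * ν i| ≤ ∑ i, |a i| * ν i :=
        (abs_sum_le_sum_abs _ _).trans_eq <|
          sum_congr rfl fun i _ => by rw [abs_mul, abs_of_nonneg (hν0 i)]
    _ ≤ M := sum_mul_le_of_sum_le_one hν0 hν1 hM ha

end WeightedSums

lemma vecMul_pow_eq_self {n R : Type*} [Fintype n] [DecidableEq n] [Semiring R]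
    {A : Matrix n n R} {x : n → R} (hx : x ᵥ* A = x) (k : ℕ) : x ᵥ* A ^ k = x := by
  induction k with
  | zero => simp
  | succ k ih => rw [pow_succ, ← vecMul_vecMul, ih, hx]

section Stochastic

variable {S : Type*} [Fintype S] {P : S → S → ℝ}

lemma RowStochastic.abs_sum_mul_le (hP : RowStochastic P) {a : S → ℝ} {M : ℝ} (hM : 0 ≤ M)
    (ha : ∀ j, |a j| ≤ M) (i : S) : |∑ j, a j * P i j| ≤ M :=
  abs_sum_mul_le_of_sum_le_one (hP.1 i) (hP.2 i).le hM ha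

lemma RowStochastic.le_one (hP : RowStochastic P) (i j : S) : P i j ≤ 1 :=
  (single_le_sum (fun k _ => hP.1 i k) (mem_univ j)).trans_eq (hP.2 i)

lemma RowStochastic.sum_vecMul (hP : RowStochastic P) (x : S → ℝ) :
    ∑ j, (x ᵥ* of P) j = ∑ i, x i := by
  simp only [vecMul, dotProduct, of_apply]
  rw [sum_comm]
  simp [← mul_sum, hP.2]

lemma RowStochastic.vecMul_eq_of_le (hP : RowStochastic P) {y : S → ℝ} (hy : y ≤ y ᵥ* of P) :
    y ᵥ* of P = y :=
  funext fun j => ((sum_eq_sum_iff_of_le fun i _ => hy i).1 (hP.sum_vecMul y).symm j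
    (mem_univ j)).symm

noncomputable def stationarityDefect (P : S → S → ℝ) : (S → ℝ) →ₗ[ℝ] (S → ℝ) × ℝ :=
  (LinearMap.id - (of P).vecMulLinear).prod (∑ i, LinearMap.proj i)

lemma stationarityDefect_apply (x : S → ℝ) :
    stationarityDefect P x = (x - x ᵥ* of P, ∑ i, x i) := by
  simp [stationarityDefect]

end Stochastic

section Irreducible

variable {S : Type*} [Fintype S] [DecidableEq S] {P : S → S → ℝ}

lemma MatIrreducible.eq_zero_of_nonneg_of_vecMul_eq_self (hP : RowStochastic P)
    (hirr : MatIrreducible P) {y : S → ℝ} (hy0 : 0 ≤ y) (hy : y ᵥ* of P = y) {i : S}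
    (hi : y i = 0) : y = 0 := by
  funext j
  obtain ⟨n, -, hn⟩ := hirr j i
  have hle : y j * (of P ^ n) j i ≤ 0 :=
    calc y j * (of P ^ n) j i ≤ (y ᵥ* of P ^ n) i :=
          single_le_sum (f := fun k => y k * (of P ^ n) k i)
            (fun k _ => mul_nonneg (hy0 k) (pow_apply_nonneg hP.1 n k i)) (mem_univ j)
      _ = 0 := by rw [vecMul_pow_eq_self hy n, hi]
  exact le_antisymm (nonpos_of_mul_nonpos_left hle hn) (hy0 j)

/-- The positive part of an invariant vector is subinvariant, hence invariant; a nonpositive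
entry then forces it to vanish. -/
lemma MatIrreducible.nonpos_of_vecMul_eq_self (hP : RowStochastic P) (hirr : MatIrreducible P)
    {x : S → ℝ} (hx : x ᵥ* of P = x) (hs : ∑ i, x i ≤ 0) : x ≤ 0 := by
  intro i
  obtain ⟨j, -, hj⟩ := exists_le_of_sum_le ⟨i, mem_univ i⟩ (hs.trans_eq sum_const_zero.symm)
  set y : S → ℝ := fun k => max (x k) 0
  have hxy : x ᵥ* of P ≤ y ᵥ* of P := fun k =>
    sum_le_sum fun l _ => mul_le_mul_of_nonneg_right (le_max_left _ _) (hP.1 l k)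
  have hy0 : 0 ≤ y ᵥ* of P := fun k =>
    sum_nonneg fun l _ => mul_nonneg (le_max_right _ _) (hP.1 l k)
  have hy : y ᵥ* of P = y := hP.vecMul_eq_of_le fun k => max_le (hx ▸ hxy k) (hy0 k)
  have hy_zero := hirr.eq_zero_of_nonneg_of_vecMul_eq_self hP (fun k => le_max_right _ _) hy
    (max_eq_right hj)
  exact (le_max_left _ _).trans (congrFun hy_zero i).le

lemma MatIrreducible.eq_zero_of_vecMul_eq_self (hP : RowStochastic P) (hirr : MatIrreducible P)
    {x : S → ℝ} (hx : x ᵥ* of P = x) (hs : ∑ i, x i = 0) : x = 0 :=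
  le_antisymm (hirr.nonpos_of_vecMul_eq_self hP hx hs.le) <| neg_nonpos.1 <|
    hirr.nonpos_of_vecMul_eq_self hP (by rw [neg_vecMul, hx]) (by simp [hs])

lemma MatIrreducible.exists_norm_le_mul_norm_stationarityDefect (hP : RowStochastic P)
    (hirr : MatIrreducible P) : ∃ c > 0, ∀ x, ‖x‖ ≤ c * ‖stationarityDefect P x‖ := by
  obtain ⟨K, hK0, hK⟩ := (stationarityDefect P).exists_antilipschitzWith <| by
    rw [LinearMap.ker_eq_bot']
    intro x hx
    rw [stationarityDefect_apply, Prod.mk_eq_zero, sub_eq_zero] at hx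
    exact hirr.eq_zero_of_vecMul_eq_self hP hx.1.symm hx.2
  exact ⟨K, hK0, ZeroHomClass.bound_of_antilipschitz _ hK⟩

end Irreducible

/-- Bernoulli's inequality. -/
lemma one_sub_one_sub_rpow_le_mul {t d b : ℝ} (ht0 : 0 ≤ t) (ht1 : t ≤ 1) (hd : 0 ≤ d)
    (hdb : d ≤ b) (hb : 1 ≤ b) : 1 - (1 - t) ^ d ≤ b * t := by
  have hbernoulli : 1 - b * t ≤ (1 - t) ^ b := by
    simpa [sub_eq_add_neg] using one_add_mul_self_le_rpow_one_add (by linarith : -1 ≤ -t) hb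
  linarith [Real.rpow_le_rpow_of_exponent_ge' (by linarith : 0 ≤ 1 - t) (by linarith) hd hdb]

lemma MatIsStationary.none_add_sum_some {T : Type*} [Fintype T] {Q : Option T → Option T → ℝ}
    {ν : Option T → ℝ} (h : MatIsStationary Q ν) : ν none + ∑ i, ν (some i) = 1 := by
  rw [← Fintype.sum_option]
  exact h.2.1

section ProbabilisticTermination

variable {S : Type*} [Fintype S] [DecidableEq S] {P D : S → S → ℝ} {H ε : ℝ} {s₀ : S}
  {μ' : Option S → ℝ}

lemma MatIsStationary.ptMatrix_none (h : MatIsStationary (PTMatrix P D H s₀) μ') :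
    ∑ i, (∑ j, (1 - (1 - 1 / H) ^ D i j) * P i j) * μ' (some i) = μ' none := by
  simpa [Fintype.sum_option, PTMatrix, mul_comm] using h.2.2 none

/-- Restricted to `S`, `μ'` is `P`-invariant up to the restart inflow minus the killed mass. -/
lemma MatIsStationary.ptMatrix_some (h : MatIsStationary (PTMatrix P D H s₀) μ') (j : S) :
    ((fun i => μ' (some i)) - (fun i => μ' (some i)) ᵥ* of P) j =
      (if j = s₀ then μ' none else 0) - ∑ i, (1 - (1 - 1 / H) ^ D i j) * P i j * μ' (some i) := by
  have hj := h.2.2 (some j)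
  simp only [Fintype.sum_option, PTMatrix] at hj
  simp only [Pi.sub_apply, vecMul, dotProduct, of_apply]
  rw [← hj, mul_ite, mul_one, mul_zero]
  simp only [sub_mul, one_mul, sum_sub_distrib, mul_comm (μ' (some _))]
  ring

lemma MatIsStationary.sum_some_le_one (h : MatIsStationary (PTMatrix P D H s₀) μ') :
    ∑ i, μ' (some i) ≤ 1 := by
  linarith [h.none_add_sum_some, h.1 none]

lemma MatIsStationary.ptMatrix_none_le (hP : RowStochastic P)
    (h : MatIsStationary (PTMatrix P D H s₀) μ') (hε : 0 ≤ ε)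
    (hw : ∀ i j, 1 - (1 - 1 / H) ^ D i j ≤ ε) : μ' none ≤ ε := by
  rw [← h.ptMatrix_none]
  exact sum_mul_le_of_sum_le_one (fun i => h.1 (some i)) h.sum_some_le_one hε
    fun i => sum_mul_le_of_sum_le_one (hP.1 i) (hP.2 i).le hε (hw i)

lemma MatIsStationary.norm_stationarityDefect_ptMatrix_sub_le
    (h : MatIsStationary (PTMatrix P D H s₀) μ') (hP : RowStochastic P) {μ : S → ℝ}
    (hμ : MatIsStationary P μ) (hε : 0 ≤ ε) (hw0 : ∀ i j, 0 ≤ 1 - (1 - 1 / H) ^ D i j)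
    (hw : ∀ i j, 1 - (1 - 1 / H) ^ D i j ≤ ε) :
    ‖stationarityDefect P ((fun i => μ' (some i)) - μ)‖ ≤ ε := by
  have hμP : μ ᵥ* of P = μ := funext hμ.2.2
  have hm := h.ptMatrix_none_le hP hε hw
  rw [stationarityDefect_apply, Prod.norm_def, max_le_iff, Real.norm_eq_abs]
  constructor
  · refine (pi_norm_le_iff_of_nonneg hε).2 fun j => ?_
    dsimp only
    rw [sub_vecMul, hμP, sub_sub_sub_cancel_right, h.ptMatrix_some j, Real.norm_eq_abs]
    refine abs_sub_le_of_nonneg_of_le (by split_ifs <;> linarith [h.1 none])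
      (by split_ifs <;> linarith) (sum_nonneg fun i _ => ?_) ?_
    · exact mul_nonneg (mul_nonneg (hw0 i j) (hP.1 i j)) (h.1 (some i))
    · exact sum_mul_le_of_sum_le_one (fun i => h.1 (some i)) h.sum_some_le_one hε fun i =>
        (mul_le_of_le_one_right (hw0 i j) (hP.le_one i j)).trans (hw i j)
  · have hmass : ∑ i, ((fun i => μ' (some i)) - μ) i = -μ' none := by
      simp only [Pi.sub_apply, sum_sub_distrib, hμ.2.1]
      linarith [h.none_add_sum_some]
    rw [hmass, abs_neg, abs_of_nonneg (h.1 none)]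
    exact hm

end ProbabilisticTermination

lemma abs_average_sub_perturbed_average_le {S : Type*} [Fintype S] {P F w : S → S → ℝ}
    {μ ν : S → ℝ} {M ε η : ℝ} (hP : RowStochastic P) (hν0 : ∀ i, 0 ≤ ν i)
    (hν1 : ∑ i, ν i ≤ 1) (hM : 0 ≤ M) (hF : ∀ i j, |F i j| ≤ M) (hε : 0 ≤ ε)
    (hw : ∀ i j, |1 - w i j| ≤ ε) (hδ : ∀ i, |μ i - ν i| ≤ η) :
    |∑ i, (∑ j, F i j * P i j) * μ i - ∑ i, (∑ j, F i j * (w i j * P i j)) * ν i|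
      ≤ Fintype.card S * (M * η) + M * ε := by
  have hsplit : ∑ i, (∑ j, F i j * P i j) * μ i - ∑ i, (∑ j, F i j * (w i j * P i j)) * ν i =
      ∑ i, (∑ j, F i j * P i j) * (μ i - ν i) +
        ∑ i, (∑ j, F i j * (1 - w i j) * P i j) * ν i := by
    rw [← sum_sub_distrib, ← sum_add_distrib]
    refine sum_congr rfl fun i _ => ?_
    have hkill : ∑ j, F i j * (1 - w i j) * P i j =
        ∑ j, F i j * P i j - ∑ j, F i j * (w i j * P i j) := by
      rw [← sum_sub_distrib]
      exact sum_congr rfl fun j _ => by ring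
    rw [hkill]
    ring
  have hstationary : |∑ i, (∑ j, F i j * P i j) * (μ i - ν i)| ≤ Fintype.card S * (M * η) :=
    calc |∑ i, (∑ j, F i j * P i j) * (μ i - ν i)|
        ≤ ∑ i, |∑ j, F i j * P i j| * |μ i - ν i| := by
          simpa only [abs_mul] using
            abs_sum_le_sum_abs (fun i => (∑ j, F i j * P i j) * (μ i - ν i)) univ
      _ ≤ ∑ _i : S, M * η := sum_le_sum fun i _ =>
          mul_le_mul (hP.abs_sum_mul_le hM (hF i) i) (hδ i) (abs_nonneg _) hM
      _ = Fintype.card S * (M * η) := by simp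
  have hweights : |∑ i, (∑ j, F i j * (1 - w i j) * P i j) * ν i| ≤ M * ε :=
    abs_sum_mul_le_of_sum_le_one hν0 hν1 (mul_nonneg hM hε) fun i =>
      hP.abs_sum_mul_le (mul_nonneg hM hε) (fun j => by
        rw [abs_mul]
        exact mul_le_mul (hF i j) (hw i j) (abs_nonneg _) hM) i
  rw [hsplit]
  exact (abs_add_le _ _).trans (add_le_add hstationary hweights)

theorem average_reward_and_difficulty_perturbation_general {S : Type*} [Fintype S]
    [DecidableEq S] (P R D : S → S → ℝ) (μ : S → ℝ) (Rmax Dmax : ℝ) (s₀ : S)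
    (hP : RowStochastic P) (hirr : MatIrreducible P) (hμ : MatIsStationary P μ)
    (hR : ∀ i j, |R i j| ≤ Rmax)
    (hD0 : ∀ i j, 0 ≤ D i j) (hD1 : ∀ i j, D i j ≤ Dmax) (hDmax : 1 ≤ Dmax) :
    ∃ C > 0, ∃ H₀ > 1, ∀ H, H₀ ≤ H → ∀ μ' : Option S → ℝ,
      MatIsStationary (PTMatrix P D H s₀) μ' →
      |(∑ i, Rhat P R i * μ i) - ∑ i, RhatPT P R D H i * μ' (some i)| ≤ C / H ∧
        |(∑ i, Dhat P D i * μ i) - ∑ i, DhatPT P D H i * μ' (some i)| ≤ C / H := by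
  obtain ⟨c, hc0, hc⟩ := hirr.exists_norm_le_mul_norm_stationarityDefect hP
  set M := max Rmax Dmax
  have hM : 0 ≤ M := le_max_of_le_right (zero_le_one.trans hDmax)
  refine ⟨(Fintype.card S * c + 1) * (M * Dmax), by positivity, 2, one_lt_two,
    fun H hH μ' hμ' => ?_⟩
  have hε : 0 ≤ Dmax / H := by positivity
  have ht : 0 ≤ 1 / H ∧ 1 / H ≤ 1 := ⟨by positivity, by rw [div_le_one] <;> linarith⟩
  have hw0 : ∀ i j, 0 ≤ 1 - (1 - 1 / H) ^ D i j := fun i j =>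
    sub_nonneg.2 (Real.rpow_le_one (by linarith) (by linarith) (hD0 i j))
  have hw : ∀ i j, 1 - (1 - 1 / H) ^ D i j ≤ Dmax / H := fun i j =>
    (one_sub_one_sub_rpow_le_mul ht.1 ht.2 (hD0 i j) (hD1 i j) hDmax).trans_eq (mul_one_div _ _)
  have hδ : ∀ i, |μ i - μ' (some i)| ≤ c * (Dmax / H) := fun i =>
    calc |μ i - μ' (some i)| = ‖((fun i => μ' (some i)) - μ) i‖ := by
          rw [Real.norm_eq_abs, abs_sub_comm]; rfl
      _ ≤ c * ‖stationarityDefect P ((fun i => μ' (some i)) - μ)‖ :=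
          (norm_le_pi_norm _ i).trans (hc _)
      _ ≤ c * (Dmax / H) := mul_le_mul_of_nonneg_left
          (hμ'.norm_stationarityDefect_ptMatrix_sub_le hP hμ hε hw0 hw) hc0.le
  have hbound : ∀ F : S → S → ℝ, (∀ i j, |F i j| ≤ M) →
      |∑ i, (∑ j, F i j * P i j) * μ i -
        ∑ i, (∑ j, F i j * ((1 - 1 / H) ^ D i j * P i j)) * μ' (some i)| ≤
        (Fintype.card S * c + 1) * (M * Dmax) / H := fun F hF =>
    (abs_average_sub_perturbed_average_le hP (fun i => hμ'.1 (some i)) hμ'.sum_some_le_one hM hF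
      hε (fun i j => (abs_of_nonneg (hw0 i j)).trans_le (hw i j)) hδ).trans_eq (by ring)
  exact ⟨hbound R fun i j => (hR i j).trans (le_max_left _ _),
    hbound D fun i j => (abs_of_nonneg (hD0 i j)).trans_le ((hD1 i j).trans (le_max_right _ _))⟩

/-- **Lemma 4.** The average reward per step and the average difficulty contribution per
step of the ARR chain and the PT chain agree up to `O(1/H)`. -/
theorem average_reward_and_difficulty_perturbation {S : Type*} [Fintype S] [Nonempty S]
    [DecidableEq S] (P R D : S → S → ℝ) (μ : S → ℝ) (Rmax Dmax : ℝ) (s₀ : S)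
    (hP : RowStochastic P) (hirr : MatIrreducible P) (hμ : MatIsStationary P μ)
    (hR : ∀ i j, |R i j| ≤ Rmax)
    (hD0 : ∀ i j, 0 ≤ D i j) (hD1 : ∀ i j, D i j ≤ Dmax) (hDmax : 1 ≤ Dmax)
    (hpos : ∃ i₀ j₀, 0 < P i₀ j₀ ∧ 0 < D i₀ j₀) :
    ∃ C > 0, ∃ H₀ > 1, ∀ H, H₀ ≤ H → ∀ μ' : Option S → ℝ,
      MatIsStationary (PTMatrix P D H s₀) μ' →
      |(∑ i, Rhat P R i * μ i) - ∑ i, RhatPT P R D H i * μ' (some i)| ≤ C / H ∧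
        |(∑ i, Dhat P D i * μ i) - ∑ i, DhatPT P D H i * μ' (some i)| ≤ C / H :=
  average_reward_and_difficulty_perturbation_general P R D μ Rmax Dmax s₀ hP hirr hμ hR hD0 hD1
    hDmax
end
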